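/- arXiv:2209.01950 — 4 statements merged into one kernel-verified Lean document; each statement's English description precedes it below -/
import Mathlib

section
/- Let α > 1/4 and let f, g : [0,∞) → ℝ be differentiable functions satisfying f′(t) = g(t) and g′(t) = −α·f(t)/(1+t²) for all t ≥ 0. Define E(t) = α·f(t)²/(1+t²)^{1/2} + (1+t²)^{1/2}·g(t)². Then there exist constants 0 < c ≤ C < ∞, depending only on α, such that c·E(0) ≤ E(t) ≤ C·E(0) for all t ≥ 0. -/
/-!
The energy `E` is not monotone, but the corrected energy `G = E - (t / √(1 + t²)) f g` satisfies
`G' = -f g / (1 + t²)^{3/2}`. By AM-GM, `2 √α |f g| ≤ E`, so for `2 √α > 1` the energies `E` and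
`G` are comparable and `|f g| ≤ K G` with `K = (2 √α - 1)⁻¹`. Hence `|G'| ≤ K ψ' G` for
`ψ(t) = t / √(1 + t²)`, and Gronwall's inequality traps `G(t)` between `e^{-K} G(0)` and
`e^K G(0)`, because `ψ` increases from `0` and stays below `1`; finally `G(0) = E(0)`.
-/

open Real Set

noncomputable section

/-- The weighted energy `E(t) = α f(t)²/(1+t²)^{1/2} + (1+t²)^{1/2} g(t)²`. -/
def waveEnergy (α : ℝ) (f g : ℝ → ℝ) (t : ℝ) : ℝ :=
  α * f t ^ 2 / Real.sqrt (1 + t ^ 2) + Real.sqrt (1 + t ^ 2) * g t ^ 2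

section Gronwall

variable {D : Set ℝ} {H H' φ φ' : ℝ → ℝ}

theorem antitoneOn_mul_exp_neg_of_hasDerivWithinAt_le (hD : Convex ℝ D)
    (hH : ∀ x ∈ D, HasDerivWithinAt H (H' x) D x) (hφ : ∀ x ∈ D, HasDerivWithinAt φ (φ' x) D x)
    (hle : ∀ x ∈ D, H' x ≤ φ' x * H x) :
    AntitoneOn (fun x => H x * exp (-φ x)) D := by
  have hderiv : ∀ x ∈ D, HasDerivWithinAt (fun x => H x * exp (-φ x))
      ((H' x - φ' x * H x) * exp (-φ x)) D x := fun x hx =>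
    ((hH x hx).mul (hφ x hx).neg.exp).congr_deriv (by simp only [Pi.neg_apply]; ring)
  refine antitoneOn_of_hasDerivWithinAt_nonpos hD
    (fun x hx => (hderiv x hx).continuousWithinAt)
    (fun x hx => (hderiv x (interior_subset hx)).mono interior_subset) fun x hx => ?_
  exact mul_nonpos_of_nonpos_of_nonneg (sub_nonpos.2 (hle x (interior_subset hx))) (exp_pos _).le

theorem le_mul_exp_sub_of_hasDerivWithinAt_le (hD : Convex ℝ D)
    (hH : ∀ x ∈ D, HasDerivWithinAt H (H' x) D x) (hφ : ∀ x ∈ D, HasDerivWithinAt φ (φ' x) D x)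
    (hle : ∀ x ∈ D, H' x ≤ φ' x * H x) {a t : ℝ} (ha : a ∈ D) (ht : t ∈ D) (hat : a ≤ t) :
    H t ≤ H a * exp (φ t - φ a) := by
  have key := antitoneOn_mul_exp_neg_of_hasDerivWithinAt_le hD hH hφ hle ha ht hat
  calc H t = H t * exp (-φ t) * exp (φ t) := by rw [mul_assoc, ← exp_add]; simp
    _ ≤ H a * exp (-φ a) * exp (φ t) := by gcongr
    _ = H a * exp (φ t - φ a) := by rw [mul_assoc, ← exp_add]; ring_nf

theorem mul_exp_sub_le_of_le_hasDerivWithinAt (hD : Convex ℝ D)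
    (hH : ∀ x ∈ D, HasDerivWithinAt H (H' x) D x) (hφ : ∀ x ∈ D, HasDerivWithinAt φ (φ' x) D x)
    (hle : ∀ x ∈ D, -(φ' x * H x) ≤ H' x) {a t : ℝ} (ha : a ∈ D) (ht : t ∈ D) (hat : a ≤ t) :
    H a * exp (φ a - φ t) ≤ H t := by
  have key := le_mul_exp_sub_of_hasDerivWithinAt_le (H := -H) (φ := -φ) hD
    (fun x hx => (hH x hx).neg) (fun x hx => (hφ x hx).neg)
    (fun x hx => by simpa [neg_mul_neg] using neg_le_neg (hle x hx)) ha ht hat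
  simp only [Pi.neg_apply, sub_neg_eq_add, neg_mul, neg_le_neg_iff] at key
  rwa [neg_add_eq_sub] at key

end Gronwall

def modifiedEnergy (α : ℝ) (f g : ℝ → ℝ) (t : ℝ) : ℝ :=
  waveEnergy α f g t - t / √(1 + t ^ 2) * (f t * g t)

theorem hasDerivAt_sqrt_one_add_sq (t : ℝ) :
    HasDerivAt (fun u => √(1 + u ^ 2)) (t / √(1 + t ^ 2)) t := by
  have h := ((hasDerivAt_pow 2 t).const_add 1).sqrt (by positivity)
  refine h.congr_deriv ?_
  field_simp
  norm_num

theorem hasDerivAt_div_sqrt_one_add_sq (t : ℝ) :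
    HasDerivAt (fun u => u / √(1 + u ^ 2)) (1 / √(1 + t ^ 2) ^ 3) t := by
  have hS : 0 < √(1 + t ^ 2) := by positivity
  have hS2 : √(1 + t ^ 2) ^ 2 = 1 + t ^ 2 := sq_sqrt (by positivity)
  refine ((hasDerivAt_id' t).div (hasDerivAt_sqrt_one_add_sq t) hS.ne').congr_deriv ?_
  field_simp
  linear_combination hS2

theorem abs_div_sqrt_one_add_sq_le_one (t : ℝ) : |t / √(1 + t ^ 2)| ≤ 1 := by
  rw [abs_div, abs_of_pos (by positivity : 0 < √(1 + t ^ 2)), div_le_one (by positivity)]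
  exact abs_le_sqrt (by linarith)

theorem hasDerivWithinAt_modifiedEnergy {α : ℝ} {f g : ℝ → ℝ} {s : Set ℝ} {t : ℝ}
    (hf : HasDerivWithinAt f (g t) s t)
    (hg : HasDerivWithinAt g (-α * f t / (1 + t ^ 2)) s t) :
    HasDerivWithinAt (modifiedEnergy α f g) (-(f t * g t) / √(1 + t ^ 2) ^ 3) s t := by
  have hS : 0 < √(1 + t ^ 2) := by positivity
  have hS2 : √(1 + t ^ 2) ^ 2 = 1 + t ^ 2 := sq_sqrt (by positivity)
  have hsqrt := (hasDerivAt_sqrt_one_add_sq t).hasDerivWithinAt (s := s)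
  have hψ := (hasDerivAt_div_sqrt_one_add_sq t).hasDerivWithinAt (s := s)
  have h := ((((hf.pow 2).const_mul α).div hsqrt hS.ne').add (hsqrt.mul (hg.pow 2))).sub
    (hψ.mul (hf.mul hg))
  refine h.congr_deriv ?_
  simp only [Pi.pow_apply, Pi.mul_apply]
  set S := √(1 + t ^ 2)
  rw [← hS2]
  field_simp
  ring

theorem two_mul_sqrt_mul_abs_le_waveEnergy {α : ℝ} (hα : 0 ≤ α) (f g : ℝ → ℝ) (t : ℝ) :
    2 * √α * |f t * g t| ≤ waveEnergy α f g t := by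
  have hS : 0 < √(1 + t ^ 2) := by positivity
  have key : 2 * √α * |f t * g t| * √(1 + t ^ 2) ≤ waveEnergy α f g t * √(1 + t ^ 2) := by
    have hE : waveEnergy α f g t * √(1 + t ^ 2) =
        √α ^ 2 * |f t| ^ 2 + √(1 + t ^ 2) ^ 2 * |g t| ^ 2 := by
      rw [waveEnergy, sq_sqrt hα, sq_abs, sq_abs]
      field_simp
    rw [hE, abs_mul]
    nlinarith [sq_nonneg (√α * |f t| - √(1 + t ^ 2) * |g t|)]
  exact le_of_mul_le_mul_right key hS

theorem abs_modifiedEnergy_sub_waveEnergy_le (α : ℝ) (f g : ℝ → ℝ) (t : ℝ) :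
    |modifiedEnergy α f g t - waveEnergy α f g t| ≤ |f t * g t| := by
  rw [modifiedEnergy, sub_sub_cancel_left, abs_neg, abs_mul]
  exact mul_le_of_le_one_left (abs_nonneg _) (abs_div_sqrt_one_add_sq_le_one t)

section Energy

variable {α : ℝ} (f g : ℝ → ℝ) (t : ℝ)

theorem modifiedEnergy_zero : modifiedEnergy α f g 0 = waveEnergy α f g 0 := by
  simp [modifiedEnergy]

theorem sub_one_mul_abs_le_modifiedEnergy (hα : 0 ≤ α) :
    (2 * √α - 1) * |f t * g t| ≤ modifiedEnergy α f g t := by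
  have h1 := two_mul_sqrt_mul_abs_le_waveEnergy hα f g t
  have h2 := abs_le.1 (abs_modifiedEnergy_sub_waveEnergy_le α f g t)
  linarith [h2.1]

theorem sub_one_mul_waveEnergy_le_modifiedEnergy (hα : 0 ≤ α) :
    (2 * √α - 1) * waveEnergy α f g t ≤ 2 * √α * modifiedEnergy α f g t := by
  have h1 := two_mul_sqrt_mul_abs_le_waveEnergy hα f g t
  have h2 := abs_le.1 (abs_modifiedEnergy_sub_waveEnergy_le α f g t)
  nlinarith [sqrt_nonneg α, h2.1]

theorem modifiedEnergy_le_add_one_mul_waveEnergy (hα : 0 ≤ α) :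
    2 * √α * modifiedEnergy α f g t ≤ (2 * √α + 1) * waveEnergy α f g t := by
  have h1 := two_mul_sqrt_mul_abs_le_waveEnergy hα f g t
  have h2 := abs_le.1 (abs_modifiedEnergy_sub_waveEnergy_le α f g t)
  nlinarith [sqrt_nonneg α, h2.2]

end Energy

theorem one_lt_two_mul_sqrt {α : ℝ} (hα : 1 / 4 < α) : 1 < 2 * √α := by
  have h : 1 / 2 < √α := lt_sqrt_of_sq_lt (by linarith)
  linarith

section Solution

variable {α : ℝ} {f g : ℝ → ℝ}

theorem modifiedEnergy_mem_Icc (hα : 1 / 4 < α)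
    (hf : ∀ t : ℝ, 0 ≤ t → HasDerivWithinAt f (g t) (Ici (0 : ℝ)) t)
    (hg : ∀ t : ℝ, 0 ≤ t → HasDerivWithinAt g (-α * f t / (1 + t ^ 2)) (Ici (0 : ℝ)) t)
    {t : ℝ} (ht : 0 ≤ t) :
    modifiedEnergy α f g t ∈ Icc (modifiedEnergy α f g 0 * exp (-(2 * √α - 1)⁻¹))
      (modifiedEnergy α f g 0 * exp (2 * √α - 1)⁻¹) := by
  have ha := one_lt_two_mul_sqrt hα
  have hα₀ : 0 ≤ α := by linarith
  set K := (2 * √α - 1)⁻¹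
  have hK : 0 < K := inv_pos.2 (by linarith)
  have hG := fun x (hx : x ∈ Ici (0 : ℝ)) => hasDerivWithinAt_modifiedEnergy (hf x hx) (hg x hx)
  have hφ := fun x (_ : x ∈ Ici (0 : ℝ)) =>
    ((hasDerivAt_div_sqrt_one_add_sq x).const_mul K).hasDerivWithinAt (s := Ici 0)
  have hbound : ∀ x ∈ Ici (0 : ℝ),
      |-(f x * g x) / √(1 + x ^ 2) ^ 3| ≤ K * (1 / √(1 + x ^ 2) ^ 3) * modifiedEnergy α f g x := by
    intro x _
    have hfg : |f x * g x| ≤ K * modifiedEnergy α f g x :=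
      (le_inv_mul_iff₀ (by linarith)).2 (sub_one_mul_abs_le_modifiedEnergy f g x hα₀)
    rw [abs_div, abs_neg, abs_of_pos (by positivity : (0 : ℝ) < √(1 + x ^ 2) ^ 3), mul_comm K,
      mul_assoc, div_eq_mul_one_div, mul_comm]
    exact mul_le_mul_of_nonneg_left hfg (by positivity)
  have hG₀ : 0 ≤ modifiedEnergy α f g 0 :=
    (mul_nonneg (by linarith) (abs_nonneg _)).trans (sub_one_mul_abs_le_modifiedEnergy f g 0 hα₀)
  have hKψ : K * (t / √(1 + t ^ 2)) ≤ K :=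
    mul_le_of_le_one_right hK.le (abs_le.1 (abs_div_sqrt_one_add_sq_le_one t)).2
  refine ⟨?_, ?_⟩
  · refine le_trans ?_ (mul_exp_sub_le_of_le_hasDerivWithinAt (convex_Ici 0) hG hφ
      (fun x hx => (abs_le.1 (hbound x hx)).1) self_mem_Ici ht ht)
    gcongr
    simp only [zero_div, mul_zero, zero_sub, neg_le_neg_iff]
    exact hKψ
  · refine (le_mul_exp_sub_of_hasDerivWithinAt_le (convex_Ici 0) hG hφ
      (fun x hx => (abs_le.1 (hbound x hx)).2) self_mem_Ici ht ht).trans ?_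
    gcongr
    simp only [zero_div, mul_zero, sub_zero]
    exact hKψ

end Solution

/-- Lemma: stability of traveling waves: for `α > 1/4` there are
constants `0 < c ≤ C`, depending only on `α`, such that for every solution of the
ODE system `f′ = g`, `g′ = −α f/(1+t²)` on `[0,∞)` the energy
`E(t) = α f(t)²/(1+t²)^{1/2} + (1+t²)^{1/2} g(t)²` satisfies
`c E(0) ≤ E(t) ≤ C E(0)` for all `t ≥ 0`. -/
theorem statement10 (α : ℝ) (hα : 1 / 4 < α) :
    ∃ c C : ℝ, 0 < c ∧ c ≤ C ∧
      ∀ f g : ℝ → ℝ,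
        (∀ t : ℝ, 0 ≤ t → HasDerivWithinAt f (g t) (Ici (0 : ℝ)) t) →
        (∀ t : ℝ, 0 ≤ t → HasDerivWithinAt g (-α * f t / (1 + t ^ 2)) (Ici (0 : ℝ)) t) →
        ∀ t : ℝ, 0 ≤ t →
          c * waveEnergy α f g 0 ≤ waveEnergy α f g t ∧
            waveEnergy α f g t ≤ C * waveEnergy α f g 0 := by
  have ha := one_lt_two_mul_sqrt hα
  have hα₀ : 0 ≤ α := by linarith
  set K := (2 * √α - 1)⁻¹
  have hK : 0 < K := inv_pos.2 (by linarith)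
  refine ⟨2 * √α * exp (-K) / (2 * √α + 1), 2 * √α * exp K / (2 * √α - 1), by positivity,
    ?_, fun f g hf hg t ht => ?_⟩
  · gcongr 2 * √α * exp ?_ / ?_ <;> linarith
  obtain ⟨hlower, hupper⟩ := modifiedEnergy_mem_Icc hα hf hg ht
  rw [modifiedEnergy_zero] at hlower hupper
  have h1 := sub_one_mul_waveEnergy_le_modifiedEnergy f g t hα₀
  have h2 := modifiedEnergy_le_add_one_mul_waveEnergy f g t hα₀
  constructor
  · rw [div_mul_eq_mul_div, div_le_iff₀ (by linarith)]
    nlinarith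
  · rw [div_mul_eq_mul_div, le_div_iff₀ (by linarith)]
    nlinarith

end
end

section
/- Let ε > 0, ξ > 0 and let k ≥ 1 be an integer with ξ/k² ≥ 100. Set t_k = (1/2)(ξ/(k+1) + ξ/k), and set t_{k−1} = (1/2)(ξ/k + ξ/(k−1)) if k ≥ 2 and t_0 = 2ξ if k = 1. Then (1/10)·ε·ξ·k^{−3/2} ≤ ∫_{t_k}^{t_{k−1}} ε·(1+t²)^{1/4}·(ξ/k²)^{1/2}·(1+(t−ξ/k)²)^{−3/4} dt ≤ 100·ε·ξ·k^{−3/2}. -/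
open Real Set MeasureTheory intervalIntegral

noncomputable section

/-! With `c = ξ/k` the integrand is `ε (ξ/k²)^{1/2} K_c(t)`, where
`K_c(t) = (1+t²)^{1/4} (1+(t-c)²)^{-3/4}`. Once `c ≥ 100`, the interval `I_k` contains
`[c-1, c+1]` and lies in `[0, 2c]`. On `[c, c+1]` the kernel is at least `c^{1/2}/2`, which gives
the lower bound. On `[0, 2c]` the growth factor is at most `2c^{1/2}`, while `(1+s²)^{-3/4}` has
integral at most `6` over any symmetric interval (compare the tails with `s^{-3/2}`), which gives
the upper bound. Finally `c^{1/2} (ξ/k²)^{1/2} = ξ k^{-3/2}`. -/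

/-- The resonant times: `t_0 = 2ξ` and `t_k = (ξ/(k+1) + ξ/k)/2` for `k ≥ 1`. -/
def tIdx (ξ : ℝ) (k : ℕ) : ℝ :=
  if k = 0 then 2 * ξ else (ξ / ((k : ℝ) + 1) + ξ / (k : ℝ)) / 2

lemma sq_rpow {x : ℝ} (hx : 0 ≤ x) (z : ℝ) : (x ^ 2) ^ z = x ^ (2 * z) := by
  exact_mod_cast (rpow_natCast_mul hx 2 z).symm

lemma continuous_one_add_sq_rpow (z : ℝ) : Continuous fun s : ℝ => (1 + s ^ 2) ^ z :=
  (by fun_prop : Continuous fun s : ℝ => 1 + s ^ 2).rpow_const fun s => Or.inl (by positivity)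

lemma integral_rpow_neg_three_halves_le_two {T : ℝ} (hT : 1 ≤ T) :
    ∫ s in (1 : ℝ)..T, s ^ (-(3 / 2) : ℝ) ≤ 2 := by
  rw [integral_rpow (Or.inr ⟨by norm_num, notMem_uIcc_of_lt one_pos (by linarith)⟩), one_rpow]
  have : 0 ≤ T ^ (-(3 / 2) + 1 : ℝ) := rpow_nonneg (by linarith) _
  rw [div_le_iff_of_neg (by norm_num)]
  linarith

lemma one_add_sq_rpow_le_rpow {s : ℝ} (hs : 0 < s) :
    (1 + s ^ 2) ^ (-(3 / 4) : ℝ) ≤ s ^ (-(3 / 2) : ℝ) := by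
  calc (1 + s ^ 2) ^ (-(3 / 4) : ℝ) ≤ (s ^ 2) ^ (-(3 / 4) : ℝ) :=
        rpow_le_rpow_of_nonpos (by positivity) (by linarith) (by norm_num)
    _ = s ^ (-(3 / 2) : ℝ) := by rw [sq_rpow hs.le]; norm_num

lemma integral_one_add_sq_rpow_le_two {T : ℝ} (hT : 1 ≤ T) :
    ∫ s in (1 : ℝ)..T, (1 + s ^ 2) ^ (-(3 / 4) : ℝ) ≤ 2 := by
  refine le_trans (integral_mono_on hT ((continuous_one_add_sq_rpow _).intervalIntegrable _ _)
    (intervalIntegrable_rpow (Or.inr (notMem_uIcc_of_lt one_pos (by linarith))))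
    fun s hs => one_add_sq_rpow_le_rpow (by linarith [hs.1]))
    (integral_rpow_neg_three_halves_le_two hT)

lemma integral_one_add_sq_rpow_le_six {R : ℝ} (hR : 1 ≤ R) :
    ∫ s in -R..R, (1 + s ^ 2) ^ (-(3 / 4) : ℝ) ≤ 6 := by
  set g : ℝ → ℝ := fun s => (1 + s ^ 2) ^ (-(3 / 4) : ℝ)
  have hg : ∀ x y, IntervalIntegrable g volume x y :=
    fun x y => (continuous_one_add_sq_rpow _).intervalIntegrable x y
  have hleft : ∫ s in -R..-1, g s = ∫ s in (1 : ℝ)..R, g s := by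
    rw [← integral_comp_neg]
    simp only [g, neg_sq]
  have hmid : ∫ s in (-1 : ℝ)..1, g s ≤ 2 := by
    calc ∫ s in (-1 : ℝ)..1, g s ≤ ∫ _ in (-1 : ℝ)..1, (1 : ℝ) :=
          integral_mono_on (by norm_num) (hg _ _) intervalIntegrable_const fun s _ =>
            rpow_le_one_of_one_le_of_nonpos (by nlinarith) (by norm_num)
      _ = 2 := by norm_num
  rw [← integral_add_adjacent_intervals (hg _ _) (hg (-1) R),
    ← integral_add_adjacent_intervals (hg (-1) 1) (hg 1 R), hleft]
  linarith [integral_one_add_sq_rpow_le_two hR]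

def resonanceKernel (c t : ℝ) : ℝ :=
  (1 + t ^ 2) ^ ((1 : ℝ) / 4) * (1 + (t - c) ^ 2) ^ (-(3 / 4) : ℝ)

lemma continuous_resonanceKernel (c : ℝ) : Continuous (resonanceKernel c) :=
  (continuous_one_add_sq_rpow _).mul ((continuous_one_add_sq_rpow _).comp (continuous_sub_right c))

lemma resonanceKernel_nonneg (c t : ℝ) : 0 ≤ resonanceKernel c t := by
  unfold resonanceKernel; positivity

lemma rpow_half_div_two_le_resonanceKernel {c t : ℝ} (hc : 0 ≤ c) (ht : t ∈ Icc c (c + 1)) :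
    c ^ ((1 : ℝ) / 2) / 2 ≤ resonanceKernel c t := by
  obtain ⟨hct, htc⟩ := ht
  have hgrowth : c ^ ((1 : ℝ) / 2) ≤ (1 + t ^ 2) ^ ((1 : ℝ) / 4) := by
    calc c ^ ((1 : ℝ) / 2) = (c ^ 2) ^ ((1 : ℝ) / 4) := by rw [sq_rpow hc]; norm_num
      _ ≤ (1 + t ^ 2) ^ ((1 : ℝ) / 4) := rpow_le_rpow (by positivity) (by nlinarith) (by norm_num)
  have hdecay : (1 : ℝ) / 2 ≤ (1 + (t - c) ^ 2) ^ (-(3 / 4) : ℝ) := by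
    calc (1 : ℝ) / 2 = 2 ^ (-1 : ℝ) := by norm_num [rpow_neg_one]
      _ ≤ 2 ^ (-(3 / 4) : ℝ) := rpow_le_rpow_of_exponent_le (by norm_num) (by norm_num)
      _ ≤ (1 + (t - c) ^ 2) ^ (-(3 / 4) : ℝ) :=
        rpow_le_rpow_of_nonpos (by positivity) (by nlinarith) (by norm_num)
  calc c ^ ((1 : ℝ) / 2) / 2 = c ^ ((1 : ℝ) / 2) * (1 / 2) := by ring
    _ ≤ resonanceKernel c t :=
      mul_le_mul hgrowth hdecay (by norm_num) (rpow_nonneg (by positivity) _)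

lemma resonanceKernel_le {c t : ℝ} (hc : 1 ≤ c) (ht : t ∈ Icc 0 (2 * c)) :
    resonanceKernel c t ≤ 2 * c ^ ((1 : ℝ) / 2) * (1 + (t - c) ^ 2) ^ (-(3 / 4) : ℝ) := by
  obtain ⟨ht0, htc⟩ := ht
  have hgrowth : (1 + t ^ 2) ^ ((1 : ℝ) / 4) ≤ 2 * c ^ ((1 : ℝ) / 2) := by
    calc (1 + t ^ 2) ^ ((1 : ℝ) / 4) ≤ ((4 * c) ^ 2) ^ ((1 : ℝ) / 4) :=
          rpow_le_rpow (by positivity) (by nlinarith) (by norm_num)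
      _ = 2 * c ^ ((1 : ℝ) / 2) := by
        rw [sq_rpow (by positivity), mul_rpow (by norm_num) (by positivity),
          show (4 : ℝ) = 2 ^ (2 : ℝ) by norm_num, ← rpow_mul (by norm_num)]
        norm_num
  exact mul_le_mul_of_nonneg_right hgrowth (rpow_nonneg (by positivity) _)

lemma rpow_half_div_two_le_integral_resonanceKernel {a b c : ℝ} (hc : 0 ≤ c) (ha : a ≤ c)
    (hb : c + 1 ≤ b) : c ^ ((1 : ℝ) / 2) / 2 ≤ ∫ t in a..b, resonanceKernel c t := by
  calc c ^ ((1 : ℝ) / 2) / 2 = ∫ _ in c..c + 1, c ^ ((1 : ℝ) / 2) / 2 := by simp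
    _ ≤ ∫ t in c..c + 1, resonanceKernel c t :=
      integral_mono_on (by linarith) intervalIntegrable_const
        ((continuous_resonanceKernel c).intervalIntegrable _ _)
        fun t ht => rpow_half_div_two_le_resonanceKernel hc ht
    _ ≤ ∫ t in a..b, resonanceKernel c t :=
      integral_mono_interval ha (by linarith) hb
        (Filter.Eventually.of_forall (resonanceKernel_nonneg c))
        ((continuous_resonanceKernel c).intervalIntegrable _ _)

lemma integral_resonanceKernel_le {a b c : ℝ} (hc : 1 ≤ c) (ha : 0 ≤ a) (hab : a ≤ b)
    (hb : b ≤ 2 * c) : ∫ t in a..b, resonanceKernel c t ≤ 12 * c ^ ((1 : ℝ) / 2) := by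
  set g : ℝ → ℝ := fun s => (1 + s ^ 2) ^ (-(3 / 4) : ℝ)
  have hg : Continuous g := continuous_one_add_sq_rpow _
  have hdecay : ∫ t in a..b, g (t - c) ≤ 6 := by
    rw [integral_comp_sub_right g c]
    refine le_trans (integral_mono_interval (by linarith) (by linarith) (by linarith)
      (Filter.Eventually.of_forall fun s => rpow_nonneg (by positivity) _)
      (hg.intervalIntegrable _ _)) (integral_one_add_sq_rpow_le_six hc)
  calc ∫ t in a..b, resonanceKernel c t ≤ ∫ t in a..b, 2 * c ^ ((1 : ℝ) / 2) * g (t - c) :=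
        integral_mono_on hab ((continuous_resonanceKernel c).intervalIntegrable _ _)
          ((hg.comp (continuous_sub_right c)).intervalIntegrable _ _ |>.const_mul _)
          fun t ht => resonanceKernel_le hc ⟨by linarith [ht.1], by linarith [ht.2]⟩
    _ = 2 * c ^ ((1 : ℝ) / 2) * ∫ t in a..b, g (t - c) := integral_const_mul _ _
    _ ≤ 2 * c ^ ((1 : ℝ) / 2) * 6 :=
        mul_le_mul_of_nonneg_left hdecay (by positivity)
    _ = 12 * c ^ ((1 : ℝ) / 2) := by ring

section ResonantTimes

variable {ξ : ℝ} {k : ℕ}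

lemma tIdx_of_ne_zero (hk : k ≠ 0) : tIdx ξ k = (ξ / ((k : ℝ) + 1) + ξ / k) / 2 :=
  if_neg hk

lemma tIdx_nonneg (hξ : 0 ≤ ξ) : 0 ≤ tIdx ξ k := by
  unfold tIdx; split_ifs <;> positivity

lemma tIdx_le_sub_one (hk : 1 ≤ k) (hres : 100 * (k : ℝ) ^ 2 ≤ ξ) :
    tIdx ξ k ≤ ξ / k - 1 := by
  have hn : (1 : ℝ) ≤ k := by exact_mod_cast hk
  have hgap : ξ / k - ξ / (k + 1) = ξ / (k * (k + 1)) := by field_simp; ring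
  have : 2 ≤ ξ / (k * (k + 1)) := by rw [le_div_iff₀ (by positivity)]; nlinarith
  rw [tIdx_of_ne_zero (by omega)]
  linarith

lemma tIdx_pred_mem_Icc (hk : 1 ≤ k) (hres : 100 * (k : ℝ) ^ 2 ≤ ξ) :
    tIdx ξ (k - 1) ∈ Icc (ξ / k + 1) (2 * (ξ / k)) := by
  rcases hk.eq_or_lt with rfl | hk2
  · norm_num [tIdx] at hres ⊢
    linarith
  · have hn : (2 : ℝ) ≤ k := by exact_mod_cast hk2
    have hcast : ((k - 1 : ℕ) : ℝ) = k - 1 := by rw [Nat.cast_sub hk, Nat.cast_one]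
    rw [tIdx_of_ne_zero (by omega), hcast, sub_add_cancel]
    have hgap : ξ / (k - 1) - ξ / k = ξ / (k * (k - 1)) := by
      field_simp [show (k : ℝ) - 1 ≠ 0 by linarith]; ring
    have : 2 ≤ ξ / (k * (k - 1)) := by rw [le_div_iff₀ (by nlinarith)]; nlinarith
    have : ξ / (k - 1) ≤ 3 * (ξ / k) := by
      rw [mul_div_assoc', div_le_div_iff₀ (by linarith) (by linarith)]; nlinarith
    constructor <;> linarith

end ResonantTimes

lemma rpow_half_div_mul_rpow_half_div_sq {ξ n : ℝ} (hξ : 0 ≤ ξ) (hn : 0 < n) :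
    (ξ / n) ^ ((1 : ℝ) / 2) * (ξ / n ^ 2) ^ ((1 : ℝ) / 2) = ξ * n ^ (-(3 / 2) : ℝ) := by
  have hsq : ξ / n * (ξ / n ^ 2) = (ξ * n ^ (-(3 / 2) : ℝ)) ^ 2 := by
    rw [mul_pow, ← rpow_natCast (n ^ _), ← rpow_mul hn.le,
      show (-(3 / 2) : ℝ) * (2 : ℕ) = -(3 : ℕ) by norm_num, rpow_neg hn.le, rpow_natCast]
    field_simp
  rw [← mul_rpow (by positivity) (by positivity), hsq, sq_rpow (by positivity)]
  norm_num

/-- Lemma: toy model resonance: for `ε, ξ > 0` and `k ≥ 1` with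
`ξ/k² ≥ 100`, the resonance integral over `I_k = (t_k, t_{k−1})` is comparable to
`ε ξ k^{−3/2}` within the stated factors. -/
theorem statement12 (ε ξ : ℝ) (k : ℕ) (hε : 0 < ε) (hξ : 0 < ξ) (hk : 1 ≤ k)
    (hres : 100 ≤ ξ / (k : ℝ) ^ 2) :
    (1 / 10) * ε * ξ * (k : ℝ) ^ (-(3 / 2) : ℝ) ≤
        (∫ t in tIdx ξ k..tIdx ξ (k - 1),
          ε * (1 + t ^ 2) ^ ((1 : ℝ) / 4) * (ξ / (k : ℝ) ^ 2) ^ ((1 : ℝ) / 2) *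
            (1 + (t - ξ / (k : ℝ)) ^ 2) ^ (-(3 / 4) : ℝ)) ∧
      (∫ t in tIdx ξ k..tIdx ξ (k - 1),
          ε * (1 + t ^ 2) ^ ((1 : ℝ) / 4) * (ξ / (k : ℝ) ^ 2) ^ ((1 : ℝ) / 2) *
            (1 + (t - ξ / (k : ℝ)) ^ 2) ^ (-(3 / 4) : ℝ)) ≤
        100 * ε * ξ * (k : ℝ) ^ (-(3 / 2) : ℝ) := by
  have hk1 : (1 : ℝ) ≤ k := by exact_mod_cast hk
  have hn : (0 : ℝ) < k := by linarith
  have hξk : 100 * (k : ℝ) ^ 2 ≤ ξ := (le_div_iff₀ (by positivity)).mp hres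
  have hc : 100 ≤ ξ / (k : ℝ) :=
    hres.trans (div_le_div_of_nonneg_left hξ.le hn (by nlinarith))
  have ha₀ : 0 ≤ tIdx ξ k := tIdx_nonneg hξ.le
  have ha := tIdx_le_sub_one hk hξk
  obtain ⟨hb, hb'⟩ := tIdx_pred_mem_Icc hk hξk
  set c := ξ / (k : ℝ)
  set A := ε * (ξ / (k : ℝ) ^ 2) ^ ((1 : ℝ) / 2)
  have hA : 0 ≤ A := by positivity
  have hscale : A * c ^ ((1 : ℝ) / 2) = ε * ξ * (k : ℝ) ^ (-(3 / 2) : ℝ) := by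
    rw [mul_assoc ε ξ, ← rpow_half_div_mul_rpow_half_div_sq hξ.le hn]; ring
  have hpos : 0 ≤ ε * ξ * (k : ℝ) ^ (-(3 / 2) : ℝ) := by positivity
  have hfactor : ∀ t, ε * (1 + t ^ 2) ^ ((1 : ℝ) / 4) * (ξ / (k : ℝ) ^ 2) ^ ((1 : ℝ) / 2) *
      (1 + (t - c) ^ 2) ^ (-(3 / 4) : ℝ) = A * resonanceKernel c t := by
    intro t; unfold resonanceKernel; ring
  simp only [hfactor]
  rw [intervalIntegral.integral_const_mul]
  have hlo := mul_le_mul_of_nonneg_left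
    (rpow_half_div_two_le_integral_resonanceKernel (by linarith)
      (by linarith : tIdx ξ k ≤ c) hb) hA
  have hhi := mul_le_mul_of_nonneg_left (integral_resonanceKernel_le (by linarith)
    ha₀ (by linarith) hb') hA
  constructor <;> linarith
end
end

section
/- Let ξ > 0 and γ ∈ (1/2, 1), and let a, b : [2ξ, ∞) → [0, ∞) be continuously differentiable functions satisfying a′(t) ≤ (ξ/t²)·b(t) and b′(t) ≤ (ξ·t)^{−1/2}·a(t) for all t ≥ 2ξ. Then there exists a constant C_γ depending only on γ (in particular independent of ξ) such that for all t ≥ 2ξ: a(t)² + (t/ξ)^{−2γ}·b(t)² ≤ C_γ·( a(2ξ)² + b(2ξ)² ). -/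
open Real Set

/-!
Rescaling `t = ξ s` turns the system into the one with `ξ = 1`, since both coefficients are
invariant under it; this is why `C_γ` does not depend on `ξ`. For the energy
`E = a² + s^(-2γ) b²`, the two differential inequalities and `2 a b s^(-γ) ≤ E` give
`E' ≤ (s^(γ-2) + s^(-1/2-γ)) E`. For `γ ∈ (1/2, 1)` both exponents are below `-1`, so the
coefficient has integral at most `1/(1-γ) + 1/(γ-1/2)` over `[2, ∞)`, and Grönwall's inequality
gives `E(s) ≤ exp (1/(1-γ) + 1/(γ-1/2)) E(2) ≤ exp (1/(1-γ) + 1/(γ-1/2)) (a(2)² + b(2)²)`.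
-/

/-- Grönwall's inequality with a variable coefficient, in integrating-factor form. -/
theorem antitoneOn_mul_exp_neg_of_hasDerivAt_le {D : Set ℝ} (hD : Convex ℝ D)
    {f f' G g : ℝ → ℝ} (hf : ContinuousOn f D) (hG : ContinuousOn G D)
    (hf' : ∀ x ∈ interior D, HasDerivAt f (f' x) x)
    (hG' : ∀ x ∈ interior D, HasDerivAt G (g x) x)
    (hle : ∀ x ∈ interior D, f' x ≤ g x * f x) :
    AntitoneOn (fun x ↦ f x * exp (-G x)) D := by
  refine antitoneOn_of_hasDerivWithinAt_nonpos hD (hf.mul (hG.neg.rexp))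
    (fun x hx ↦ ((hf' x hx).mul (hG' x hx).neg.exp).hasDerivWithinAt) fun x hx ↦ ?_
  calc f' x * exp (-G x) + f x * (exp (-G x) * -g x)
      = (f' x - g x * f x) * exp (-G x) := by ring
    _ ≤ 0 := mul_nonpos_of_nonpos_of_nonneg (sub_nonpos.2 (hle x hx)) (exp_pos _).le

theorem hasDerivAt_rpow_div_self {p x : ℝ} (hp : p ≠ 0) (hx : 0 < x) :
    HasDerivAt (fun x ↦ x ^ p / p) (x ^ (p - 1)) x := by
  simpa only [mul_div_cancel_left₀ _ hp] using
    (hasDerivAt_rpow_const (p := p) (Or.inl hx.ne')).div_const p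

theorem rpow_div_self_mem_Icc {p x : ℝ} (hp : p < 0) (hx : 1 ≤ x) : x ^ p / p ∈ Icc p⁻¹ 0 := by
  rw [inv_eq_one_div]
  exact ⟨div_le_div_of_nonpos_of_le hp.le (rpow_le_one_of_one_le_of_nonpos hx hp.le),
    div_nonpos_of_nonneg_of_nonpos (rpow_nonneg (zero_le_one.trans hx) p) hp.le⟩

theorem rpow_div_add_rpow_div_mem_Icc {γ x : ℝ} (hγ0 : 1 / 2 < γ) (hγ1 : γ < 1) (hx : 1 ≤ x) :
    x ^ (γ - 1) / (γ - 1) + x ^ (1 / 2 - γ) / (1 / 2 - γ) ∈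
      Icc (-((1 - γ)⁻¹ + (γ - 1 / 2)⁻¹)) 0 := by
  have h₁ := rpow_div_self_mem_Icc (by linarith : γ - 1 < 0) hx
  have h₂ := rpow_div_self_mem_Icc (by linarith : 1 / 2 - γ < 0) hx
  rw [← neg_sub γ 1, ← neg_sub (1 / 2) γ, inv_neg, inv_neg, neg_add, neg_neg, neg_neg]
  exact ⟨add_le_add h₁.1 h₂.1, add_nonpos h₁.2 h₂.2⟩

/-- The algebra behind `weightedEnergy_deriv_le`, with the weight written as `l ^ 2`: up to the
slack in the hypotheses, the two sides differ by `(p / l + l * q) * (A - l * B) ^ 2`. -/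
theorem energy_deriv_le {A B A' B' p q l d : ℝ} (hl : 0 < l) (hA : 0 ≤ A) (hB : 0 ≤ B)
    (hp : 0 ≤ p) (hq : 0 ≤ q) (hA' : A' ≤ p * B) (hB' : B' ≤ q * A) (hd : d ≤ 0) :
    2 * A * A' + d * B ^ 2 + l ^ 2 * (2 * B * B') ≤ (p / l + l * q) * (A ^ 2 + l ^ 2 * B ^ 2) := by
  have hAA' : A * A' ≤ A * (p * B) := mul_le_mul_of_nonneg_left hA' hA
  have hBB' : l ^ 2 * (B * B') ≤ l ^ 2 * (B * (q * A)) :=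
    mul_le_mul_of_nonneg_left (mul_le_mul_of_nonneg_left hB' hB) (by positivity)
  have hsq : 0 ≤ (p / l + l * q) * (A - l * B) ^ 2 := by positivity
  have hid : (p / l + l * q) * (A ^ 2 + l ^ 2 * B ^ 2)
      = (p / l + l * q) * (A - l * B) ^ 2 + 2 * A * B * (p + l ^ 2 * q) := by
    field_simp
    ring
  linarith [mul_nonpos_of_nonpos_of_nonneg hd (sq_nonneg B)]

section WeightedEnergy

variable {γ : ℝ} {a b : ℝ → ℝ} {s : ℝ}

noncomputable def weightedEnergy (γ : ℝ) (a b : ℝ → ℝ) (s : ℝ) : ℝ :=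
  a s ^ 2 + s ^ (-(2 * γ)) * b s ^ 2

theorem weightedEnergy_nonneg (hs : 0 ≤ s) : 0 ≤ weightedEnergy γ a b s := by
  have := rpow_nonneg hs (-(2 * γ))
  unfold weightedEnergy
  positivity

theorem weightedEnergy_le_of_one_le (hγ : 0 ≤ γ) (hs : 1 ≤ s) :
    weightedEnergy γ a b s ≤ a s ^ 2 + b s ^ 2 := by
  have hw : s ^ (-(2 * γ)) ≤ 1 := rpow_le_one_of_one_le_of_nonpos hs (by linarith)
  unfold weightedEnergy
  gcongr
  exact mul_le_of_le_one_left (sq_nonneg _) hw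

theorem continuousOn_weightedEnergy {D : Set ℝ} (hD : ∀ s ∈ D, s ≠ 0) (ha : ContinuousOn a D)
    (hb : ContinuousOn b D) : ContinuousOn (weightedEnergy γ a b) D :=
  (ha.pow 2).add ((continuousOn_id.rpow_const fun s hs ↦ Or.inl (hD s hs)).mul (hb.pow 2))

theorem hasDerivAt_weightedEnergy {a' b' : ℝ} (hs : 0 < s) (ha : HasDerivAt a a' s)
    (hb : HasDerivAt b b' s) :
    HasDerivAt (weightedEnergy γ a b) (2 * a s * a' + -(2 * γ) * s ^ (-(2 * γ) - 1) * b s ^ 2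
      + s ^ (-(2 * γ)) * (2 * b s * b')) s := by
  refine ((ha.fun_pow 2).fun_add
    ((hasDerivAt_rpow_const (Or.inl hs.ne')).fun_mul (hb.fun_pow 2))).congr_deriv ?_
  push_cast
  ring

theorem weightedEnergy_deriv_le {a' b' : ℝ} (hγ : 0 ≤ γ) (hs : 0 < s) (ha : 0 ≤ a s)
    (hb : 0 ≤ b s) (ha' : a' ≤ s ^ (-2 : ℝ) * b s) (hb' : b' ≤ s ^ (-(1 / 2) : ℝ) * a s) :
    2 * a s * a' + -(2 * γ) * s ^ (-(2 * γ) - 1) * b s ^ 2 + s ^ (-(2 * γ)) * (2 * b s * b') ≤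
      (s ^ (γ - 1 - 1) + s ^ (1 / 2 - γ - 1)) * weightedEnergy γ a b s := by
  have hl : (s ^ (-γ)) ^ 2 = s ^ (-(2 * γ)) := by
    rw [← rpow_natCast, ← rpow_mul hs.le]
    ring_nf
  have hg : s ^ (γ - 1 - 1) + s ^ (1 / 2 - γ - 1)
      = s ^ (-2 : ℝ) / s ^ (-γ) + s ^ (-γ) * s ^ (-(1 / 2) : ℝ) := by
    rw [← rpow_sub hs, ← rpow_add hs]
    ring_nf
  have hd : -(2 * γ) * s ^ (-(2 * γ) - 1) ≤ 0 :=
    mul_nonpos_of_nonpos_of_nonneg (by linarith) (rpow_nonneg hs.le _)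
  rw [weightedEnergy, hg, ← hl]
  exact energy_deriv_le (rpow_pos_of_pos hs _) ha hb (rpow_nonneg hs.le _) (rpow_nonneg hs.le _)
    ha' hb' hd

end WeightedEnergy

theorem weightedEnergy_le_of_hasDerivWithinAt {γ x₀ : ℝ} (hγ0 : 1 / 2 < γ) (hγ1 : γ < 1)
    (hx₀ : 1 ≤ x₀) {a b a' b' : ℝ → ℝ}
    (ha : ∀ s, x₀ ≤ s → 0 ≤ a s) (hb : ∀ s, x₀ ≤ s → 0 ≤ b s)
    (hda : ∀ s, x₀ ≤ s → HasDerivWithinAt a (a' s) (Ici x₀) s)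
    (hdb : ∀ s, x₀ ≤ s → HasDerivWithinAt b (b' s) (Ici x₀) s)
    (ha' : ∀ s, x₀ ≤ s → a' s ≤ s ^ (-2 : ℝ) * b s)
    (hb' : ∀ s, x₀ ≤ s → b' s ≤ s ^ (-(1 / 2) : ℝ) * a s) {s : ℝ} (hs : x₀ ≤ s) :
    weightedEnergy γ a b s ≤ exp ((1 - γ)⁻¹ + (γ - 1 / 2)⁻¹) * (a x₀ ^ 2 + b x₀ ^ 2) := by
  set G : ℝ → ℝ := fun s ↦ s ^ (γ - 1) / (γ - 1) + s ^ (1 / 2 - γ) / (1 / 2 - γ)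
  have hpos : ∀ s ∈ Ici x₀, 0 < s := fun s hs ↦ zero_lt_one.trans_le (hx₀.trans hs)
  have hE_cont : ContinuousOn (weightedEnergy γ a b) (Ici x₀) :=
    continuousOn_weightedEnergy (fun s hs ↦ (hpos s hs).ne')
      (fun s hs ↦ (hda s hs).continuousWithinAt) (fun s hs ↦ (hdb s hs).continuousWithinAt)
  have hG_cont : ContinuousOn G (Ici x₀) := by
    refine ContinuousOn.fun_add ?_ ?_ <;>
      exact (continuousOn_id.rpow_const fun s hs ↦ Or.inl (hpos s hs).ne').div_const _
  have hanti : AntitoneOn (fun s ↦ weightedEnergy γ a b s * exp (-G s)) (Ici x₀) := by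
    apply antitoneOn_mul_exp_neg_of_hasDerivAt_le (convex_Ici x₀) hE_cont hG_cont
    case hf' =>
      intro s hs
      rw [interior_Ici, mem_Ioi] at hs
      exact hasDerivAt_weightedEnergy (hpos s hs.le) ((hda s hs.le).hasDerivAt (Ici_mem_nhds hs))
        ((hdb s hs.le).hasDerivAt (Ici_mem_nhds hs))
    case hG' =>
      intro s hs
      rw [interior_Ici, mem_Ioi] at hs
      exact (hasDerivAt_rpow_div_self (by linarith) (hpos s hs.le)).add
        (hasDerivAt_rpow_div_self (by linarith) (hpos s hs.le))
    case hle =>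
      intro s hs
      rw [interior_Ici, mem_Ioi] at hs
      exact weightedEnergy_deriv_le (by linarith) (hpos s hs.le) (ha s hs.le) (hb s hs.le)
        (ha' s hs.le) (hb' s hs.le)
  calc weightedEnergy γ a b s ≤ weightedEnergy γ a b s * exp (-G s) :=
        le_mul_of_one_le_right (weightedEnergy_nonneg (hpos s hs).le)
          (one_le_exp (by linarith [(rpow_div_add_rpow_div_mem_Icc hγ0 hγ1 (hx₀.trans hs)).2]))
    _ ≤ weightedEnergy γ a b x₀ * exp (-G x₀) := hanti self_mem_Ici hs hs
    _ ≤ (a x₀ ^ 2 + b x₀ ^ 2) * exp ((1 - γ)⁻¹ + (γ - 1 / 2)⁻¹) :=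
        mul_le_mul (weightedEnergy_le_of_one_le (by linarith) hx₀)
          (exp_le_exp.2 (by linarith [(rpow_div_add_rpow_div_mem_Icc hγ0 hγ1 hx₀).1]))
          (exp_pos _).le (by positivity)
    _ = _ := mul_comm _ _

theorem HasDerivWithinAt.comp_const_mul_Ici {f : ℝ → ℝ} {f' c x₀ s : ℝ} (hc : 0 < c)
    (hf : HasDerivWithinAt f f' (Ici (x₀ * c)) (c * s)) :
    HasDerivWithinAt (fun u ↦ f (c * u)) (c * f') (Ici x₀) s := by
  have hmaps : MapsTo (c * ·) (Ici x₀) (Ici (x₀ * c)) := fun u (hu : x₀ ≤ u) ↦ by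
    rw [mem_Ici, mul_comm x₀]
    exact mul_le_mul_of_nonneg_left hu hc.le
  exact (hf.comp s ((hasDerivWithinAt_id s _).const_mul c) hmaps).congr_deriv (by ring)

theorem mul_le_rpow_neg_two_mul_of_le {ξ s x y : ℝ} (hξ : 0 < ξ) (hs : 0 < s)
    (h : y ≤ ξ / (ξ * s) ^ 2 * x) : ξ * y ≤ s ^ (-2 : ℝ) * x := by
  have hcoeff : ξ * (ξ / (ξ * s) ^ 2) = s ^ (-2 : ℝ) := by
    rw [rpow_neg hs.le, rpow_two]
    field_simp
  rw [← hcoeff, mul_assoc]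
  exact mul_le_mul_of_nonneg_left h hξ.le

theorem mul_le_rpow_neg_half_mul_of_le {ξ s x y : ℝ} (hξ : 0 < ξ) (hs : 0 ≤ s)
    (h : y ≤ (ξ * (ξ * s)) ^ (-(1 / 2) : ℝ) * x) : ξ * y ≤ s ^ (-(1 / 2) : ℝ) * x := by
  have hξξ : ξ ^ (-(1 / 2) : ℝ) * ξ ^ (-(1 / 2) : ℝ) = ξ⁻¹ := by
    rw [← rpow_add hξ]
    norm_num [rpow_neg_one]
  have hcoeff : ξ * (ξ * (ξ * s)) ^ (-(1 / 2) : ℝ) = s ^ (-(1 / 2) : ℝ) := by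
    rw [mul_rpow hξ.le (by positivity), mul_rpow hξ.le hs, ← mul_assoc, ← mul_assoc, mul_assoc ξ,
      hξξ, mul_inv_cancel₀ hξ.ne', one_mul]
  rw [← hcoeff, mul_assoc]
  exact mul_le_mul_of_nonneg_left h hξ.le

/-- long-time ODE comparison: for `γ ∈ (1/2, 1)` there is a constant
`C_γ` depending only on `γ` such that for every `ξ > 0` and all nonnegative `C¹`
functions `a, b` on `[2ξ,∞)` with `a′ ≤ (ξ/t²) b` and `b′ ≤ (ξt)^{−1/2} a`, one has
`a(t)² + (t/ξ)^{−2γ} b(t)² ≤ C_γ (a(2ξ)² + b(2ξ)²)` for all `t ≥ 2ξ`. -/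
theorem statement18 (γ : ℝ) (hγ0 : 1 / 2 < γ) (hγ1 : γ < 1) :
    ∃ C : ℝ, 0 < C ∧
      ∀ (ξ : ℝ), 0 < ξ →
      ∀ a b a' b' : ℝ → ℝ,
        (∀ t : ℝ, 2 * ξ ≤ t → 0 ≤ a t) →
        (∀ t : ℝ, 2 * ξ ≤ t → 0 ≤ b t) →
        (∀ t : ℝ, 2 * ξ ≤ t → HasDerivWithinAt a (a' t) (Ici (2 * ξ)) t) →
        (∀ t : ℝ, 2 * ξ ≤ t → HasDerivWithinAt b (b' t) (Ici (2 * ξ)) t) →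
        ContinuousOn a' (Ici (2 * ξ)) →
        ContinuousOn b' (Ici (2 * ξ)) →
        (∀ t : ℝ, 2 * ξ ≤ t → a' t ≤ (ξ / t ^ 2) * b t) →
        (∀ t : ℝ, 2 * ξ ≤ t → b' t ≤ (ξ * t) ^ (-(1 / 2) : ℝ) * a t) →
        ∀ t : ℝ, 2 * ξ ≤ t →
          a t ^ 2 + (t / ξ) ^ (-(2 * γ)) * b t ^ 2 ≤
            C * (a (2 * ξ) ^ 2 + b (2 * ξ) ^ 2) := by
  refine ⟨exp ((1 - γ)⁻¹ + (γ - 1 / 2)⁻¹), exp_pos _, ?_⟩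
  intro ξ hξ a b a' b' ha hb hda hdb _ _ ha' hb' t ht
  have hscale : ∀ s, 2 ≤ s → 2 * ξ ≤ ξ * s := fun s hs ↦ by
    rw [mul_comm 2]
    exact mul_le_mul_of_nonneg_left hs hξ.le
  have key := weightedEnergy_le_of_hasDerivWithinAt hγ0 hγ1 one_le_two
    (a := fun s ↦ a (ξ * s)) (b := fun s ↦ b (ξ * s))
    (a' := fun s ↦ ξ * a' (ξ * s)) (b' := fun s ↦ ξ * b' (ξ * s))
    (fun s hs ↦ ha _ (hscale s hs)) (fun s hs ↦ hb _ (hscale s hs))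
    (fun s hs ↦ (hda _ (hscale s hs)).comp_const_mul_Ici hξ)
    (fun s hs ↦ (hdb _ (hscale s hs)).comp_const_mul_Ici hξ)
    (fun s hs ↦ mul_le_rpow_neg_two_mul_of_le hξ (by linarith) (ha' _ (hscale s hs)))
    (fun s hs ↦ mul_le_rpow_neg_half_mul_of_le hξ (by linarith) (hb' _ (hscale s hs)))
    (s := t / ξ) (by rwa [le_div_iff₀ hξ])
  simpa only [weightedEnergy, mul_div_cancel₀ t hξ.ne', mul_comm ξ 2] using key
end

section
/- There exists a universal constant C such that for all real ξ ≥ 1, all real t with t ≥ ξ^{1/2}, every l ∈ ℤ and each sign ι ∈ {+1, −1}: (ξ/(1+t²)) · ( (l² + (ξ−lt)²) / ((l+ι)² + (ξ−(l+ι)t)²) )^{1/4} ≤ C. -/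
open Real

noncomputable section

set_option maxHeartbeats 1600000 in
/-- coefficient bound in the regime `t ≥ √ξ`: there is a universal
constant `C` such that for all `ξ ≥ 1`, `t ≥ ξ^{1/2}`, `l ∈ ℤ` and sign `ι = ±1`,
`(ξ/(1+t²)) ((l²+(ξ−lt)²)/((l+ι)²+(ξ−(l+ι)t)²))^{1/4} ≤ C`. -/
theorem statement19 :
    ∃ C : ℝ, 0 < C ∧
      ∀ (ξ t : ℝ) (l ι : ℤ), 1 ≤ ξ → ξ ^ ((1 : ℝ) / 2) ≤ t → (ι = 1 ∨ ι = -1) →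
        (ξ / (1 + t ^ 2)) *
          ((((l : ℝ) ^ 2 + (ξ - l * t) ^ 2) /
              (((l : ℝ) + (ι : ℝ)) ^ 2 + (ξ - ((l : ℝ) + (ι : ℝ)) * t) ^ 2)) ^
            ((1 : ℝ) / 4)) ≤ C := by
  refine ⟨2, by norm_num, ?_⟩
  intro ξ t l ι hξ hts hι
  have hξ0 : (0:ℝ) < ξ := by linarith
  have hst : Real.sqrt ξ ≤ t := by rwa [Real.sqrt_eq_rpow]
  have hs1 : (1:ℝ) ≤ Real.sqrt ξ := by
    rw [show (1:ℝ) = Real.sqrt 1 from (Real.sqrt_one).symm]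
    exact Real.sqrt_le_sqrt hξ
  have h1t : (1:ℝ) ≤ t := le_trans hs1 hst
  have hsq : (Real.sqrt ξ)^2 = ξ := Real.sq_sqrt hξ0.le
  have hξt : ξ ≤ t^2 := by nlinarith [Real.sqrt_nonneg ξ]
  set k : ℝ := (l:ℝ) + (ι:ℝ) with hk
  set a : ℝ := (l:ℝ)^2 + (ξ - l*t)^2 with ha
  set b : ℝ := k^2 + (ξ - k*t)^2 with hbdef
  clear_value k a b
  have ht2 : (1:ℝ) ≤ t^2 := by nlinarith
  have hb : ξ^2/(2*t^2) ≤ b := by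
    rw [div_le_iff₀ (by positivity), hbdef]
    nlinarith [sq_nonneg (ξ - 2*k*t), sq_nonneg (ξ - k*t), sq_nonneg k,
      mul_le_mul_of_nonneg_left (sq_nonneg (ξ - k*t)) (by linarith : (0:ℝ) ≤ t^2 - 1)]
  have hbpos : 0 < b := lt_of_lt_of_le (by positivity) hb
  have hι2 : ((ι:ℝ))^2 = 1 := by rcases hι with h | h <;> simp [h]
  have hab : a ≤ 2*b + 2*(1 + t^2) := by
    have hl : (l:ℝ) = k - ι := by rw [hk]; ring
    rw [ha, hbdef, hl]
    nlinarith [sq_nonneg (k + (ι:ℝ)), sq_nonneg (ξ - k*t + ι*t), sq_nonneg (ξ - k*t - ι*t), hι2]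
  set Y : ℝ := 2*t/Real.sqrt ξ with hYdef
  clear_value Y
  have hs0 : 0 < Real.sqrt ξ := lt_of_lt_of_le one_pos hs1
  have hY0 : 0 ≤ Y := by rw [hYdef]; positivity
  have hY4 : Y^4 = 16*t^4/ξ^2 := by
    rw [hYdef, div_pow]
    have h4 : (Real.sqrt ξ)^4 = ξ^2 := by nlinarith [hsq]
    rw [h4]; ring_nf
  have h1 : ξ^2 ≤ t^4 := by nlinarith
  have h2 : ξ^2 ≤ 2*t^2*b := by
    have := (div_le_iff₀ (by positivity : (0:ℝ) < 2*t^2)).mp hb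
    linarith
  have e1 : a*ξ^2 ≤ (2*b + 2*(1+t^2))*ξ^2 := mul_le_mul_of_nonneg_right hab (sq_nonneg ξ)
  have e2 : 2*b*ξ^2 ≤ 2*b*t^4 := mul_le_mul_of_nonneg_left h1 (by positivity)
  have e3 : (2*(1+t^2))*ξ^2 ≤ (2*(1+t^2))*(2*t^2*b) := mul_le_mul_of_nonneg_left h2 (by positivity)
  have e4 : (2*(1+t^2))*(2*t^2*b) ≤ 8*t^4*b := by
    nlinarith [mul_nonneg (mul_nonneg (by positivity : (0:ℝ) ≤ 4*t^2) hbpos.le) (by linarith : (0:ℝ) ≤ t^2 - 1)]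
  have key0 : a * ξ^2 ≤ 16*t^4*b := by
    nlinarith [e1, e2, e3, e4, mul_nonneg (by positivity : (0:ℝ) ≤ t^4) hbpos.le]
  have key : a/b ≤ Y^4 := by
    rw [div_le_iff₀ hbpos, hY4, div_mul_eq_mul_div, le_div_iff₀ (pow_pos hξ0 2)]
    nlinarith [key0]
  have hr : (a/b)^((1:ℝ)/4) ≤ Y := by
    calc (a/b)^((1:ℝ)/4) ≤ (Y^4)^((1:ℝ)/4) :=
          Real.rpow_le_rpow (div_nonneg (by rw [ha]; positivity) hbpos.le) key (by norm_num)
      _ = Y := by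
          rw [← Real.rpow_natCast Y 4, ← Real.rpow_mul hY0]
          norm_num
  have hfrac : (0:ℝ) ≤ ξ/(1+t^2) := by positivity
  calc ξ/(1+t^2) * ((a/b)^((1:ℝ)/4)) ≤ ξ/(1+t^2) * Y :=
        mul_le_mul_of_nonneg_left hr hfrac
    _ ≤ 2 := by
        rw [hYdef, div_mul_div_comm, div_le_iff₀ (by positivity)]
        nlinarith [mul_le_mul_of_nonneg_left hst (Real.sqrt_nonneg ξ),
          mul_le_mul_of_nonneg_left hst (le_trans hs0.le hst),
          Real.sqrt_nonneg ξ]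

end
end
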